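/- The sequence H(N,1/2) = (1/(N·2^N)) Σ_{k=0}^{N} C(N,k) log₂ C(N,k) converges to 1 as N → ∞. -/

import Mathlib

open Finset Filter

/-!
Writing `p_k = C(N,k) / 2^N`, one has `H(N,1/2) = 1 - Ent(p) / N`, where `Ent(p)` is the
Shannon entropy (in bits) of a distribution on `N + 1` points. Since
`0 ≤ Ent(p) ≤ log₂ (N + 1)`, this gives `1 - log₂ (N + 1) / N ≤ H(N,1/2) ≤ 1`. For `n` weights
`c_i ≥ 0` with sum `T`, the two entropy bounds read `T log (T / n) ≤ ∑ c_i log c_i ≤ T log T`: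
the upper one because each `c_i ≤ T`, the lower one by Jensen's inequality for the convex
function `x ↦ x log x`.
-/
/-- `H(N,1/2) = (1/(N·2^N)) ∑_{k=0}^{N} C(N,k) log₂ C(N,k)`. -/
noncomputable def Hhalf (N : ℕ) : ℝ :=
  (1 / ((N : ℝ) * 2 ^ N)) * ∑ k ∈ Finset.range (N + 1),
    (N.choose k : ℝ) * Real.logb 2 (N.choose k)

open Real

section MulLog

variable {ι : Type*} {s : Finset ι} {c : ι → ℝ}

theorem sum_mul_log_le_sum_mul_log_sum (hc : ∀ i ∈ s, 0 ≤ c i) :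
    ∑ i ∈ s, c i * log (c i) ≤ (∑ i ∈ s, c i) * log (∑ i ∈ s, c i) := by
  rw [sum_mul]
  refine sum_le_sum fun i hi => ?_
  rcases (hc i hi).eq_or_lt with h | h
  · simp [← h]
  · gcongr
    exact single_le_sum hc hi

theorem sum_mul_log_div_card_le_sum_mul_log (hc : ∀ i ∈ s, 0 ≤ c i) :
    (∑ i ∈ s, c i) * log ((∑ i ∈ s, c i) / #s) ≤ ∑ i ∈ s, c i * log (c i) := by
  rcases s.eq_empty_or_nonempty with rfl | hs
  · simp
  have hn : (0 : ℝ) < #s := by exact_mod_cast hs.card_pos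
  have jensen := convexOn_mul_log.map_sum_le (t := s) (w := fun _ => (#s : ℝ)⁻¹) (p := c)
    (fun _ _ => by positivity) (by simp [hn.ne']) hc
  simp only [smul_eq_mul, ← mul_sum] at jensen
  rwa [mul_assoc, mul_le_mul_iff_of_pos_left (inv_pos.2 hn), inv_mul_eq_div] at jensen

end MulLog

theorem sum_range_choose_cast (N : ℕ) : ∑ k ∈ range (N + 1), (N.choose k : ℝ) = 2 ^ N := by
  exact_mod_cast Nat.sum_range_choose N

theorem sum_choose_mul_log_choose_le (N : ℕ) :
    ∑ k ∈ range (N + 1), (N.choose k : ℝ) * log (N.choose k) ≤ 2 ^ N * (N * log 2) := by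
  have h := sum_mul_log_le_sum_mul_log_sum (s := range (N + 1)) (c := fun k => (N.choose k : ℝ))
    fun _ _ => by positivity
  rwa [sum_range_choose_cast, log_pow] at h

theorem le_sum_choose_mul_log_choose (N : ℕ) :
    2 ^ N * (N * log 2 - log (N + 1)) ≤
      ∑ k ∈ range (N + 1), (N.choose k : ℝ) * log (N.choose k) := by
  have h := sum_mul_log_div_card_le_sum_mul_log (s := range (N + 1))
    (c := fun k => (N.choose k : ℝ)) fun _ _ => by positivity
  rwa [sum_range_choose_cast, card_range, log_div (by positivity) (by positivity), log_pow,
    Nat.cast_add_one] at h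

theorem Hhalf_eq (N : ℕ) :
    Hhalf N =
      (∑ k ∈ range (N + 1), (N.choose k : ℝ) * log (N.choose k)) / (N * 2 ^ N * log 2) := by
  simp only [Hhalf, logb, mul_div_assoc', ← sum_div]
  field_simp

theorem Hhalf_le_one (N : ℕ) : Hhalf N ≤ 1 := by
  rw [Hhalf_eq]
  exact div_le_one_of_le₀ ((sum_choose_mul_log_choose_le N).trans_eq (by ring)) (by positivity)

theorem one_sub_logb_div_le_Hhalf {N : ℕ} (hN : 0 < N) : 1 - logb 2 (N + 1) / N ≤ Hhalf N := by
  rw [Hhalf_eq, le_div_iff₀ (by positivity)]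
  refine Eq.trans_le ?_ (le_sum_choose_mul_log_choose N)
  have : (N : ℝ) ≠ 0 := by positivity
  rw [logb]
  field_simp

/-- The sequence `H(N,1/2)` converges to `1` as `N → ∞`. -/
theorem Hhalf_tendsto_one : Tendsto Hhalf atTop (nhds 1) := by
  have hlog : Tendsto (fun N : ℕ => logb 2 (N + 1) / N) atTop (nhds 0) := by
    have := (tendsto_pow_logb_div_mul_add_atTop (b := 2) 1 (-1) 1 one_ne_zero).comp
      (tendsto_atTop_add_const_right atTop 1 tendsto_natCast_atTop_atTop)
    simpa [Function.comp_def] using this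
  refine tendsto_of_tendsto_of_tendsto_of_le_of_le' (by simpa using hlog.const_sub 1)
    tendsto_const_nhds ?_ (Eventually.of_forall Hhalf_le_one)
  filter_upwards [eventually_gt_atTop 0] with N hN using one_sub_logb_div_le_Hhalf hN
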